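/- For y = (y₁, y₂, y₃) ∈ ℝ³ set ⟨y̌⟩ = 1 + y₂² + y₃² and W̄(y) = ⟨y̌⟩^{1/2} Ū(⟨y̌⟩^{-3/2} y₁), where Ū is the inverse of u ↦ -u - u³. Then W̄ is C^∞ on ℝ³ and solves the 3D self-similar Burgers equation: -(1/2) W̄ + ((3/2) y₁ + W̄) ∂₁W̄ + (1/2) y₂ ∂₂W̄ + (1/2) y₃ ∂₃W̄ = 0 at every point of ℝ³. -/

import Mathlib

/-!
The cubic `u ↦ u + u³` is a smooth increasing bijection of `ℝ` with derivative `1 + 3u² > 0`, so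
its inverse, and hence `Ū(z)`, is smooth, with `Ū' = -(1 + 3Ū²)⁻¹`. Substituting
`z = -Ū - Ū³` shows that `Ū` solves the one-dimensional self-similar Burgers equation
`-Ū/2 + (3z/2 + Ū) Ū' = 0`. Writing `r = ⟨y̌⟩^{1/2}` and `s = y₁ / r³`, we have `W̄ = r Ū(s)`,
`∂₁W̄ = Ū'(s) / r²` and `∂_μ W̄ = ∂_μ r (Ū - 3sŪ')(s)` with `y_μ ∂_μ r = (r² - 1) / r`; inserting
these, the three-dimensional Burgers operator applied to `W̄` at `y` becomes the one-dimensional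
operator applied to `Ū` at `s`, divided by `r`.
-/

open scoped ContDiff

theorem StrictMono.contDiff_of_rightInverse {f g f' : ℝ → ℝ} {n : WithTop ℕ∞}
    (hf : StrictMono f) (hgf : Function.RightInverse g f) (hf' : ∀ x, HasDerivAt f (f' x) x)
    (hf'0 : ∀ x, f' x ≠ 0) (hfn : ContDiff ℝ n f) : ContDiff ℝ n g := by
  let e := (hf.orderIsoOfSurjective f hgf.surjective).toHomeomorph
  have hg : g = e.symm := funext fun z => hf.injective <| by
    rw [hgf z]
    exact (e.apply_symm_apply z).symm
  exact hg ▸ e.contDiff_symm_deriv hf'0 hf' hfn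

noncomputable def selfSimilarBurgers1d (U : ℝ → ℝ) (s : ℝ) : ℝ :=
  -(1 / 2) * U s + ((3 / 2) * s + U s) * deriv U s

section CubicInverse

variable {U : ℝ → ℝ}

theorem contDiff_of_eq_neg_sub_cube (hU : ∀ z, z = -U z - U z ^ 3) : ContDiff ℝ ω U := by
  have hmono : StrictMono fun u : ℝ => u + u ^ 3 :=
    strictMono_id.add (Odd.strictMono_pow (by decide))
  have hinv : Function.RightInverse (fun z => U (-z)) fun u => u + u ^ 3 := fun z => by
    have := hU (-z)
    dsimp only
    linarith
  have hsmooth := hmono.contDiff_of_rightInverse (n := ω) hinv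
    (fun u => (hasDerivAt_id' u).fun_add (hasDerivAt_pow 3 u)) (fun u => by norm_num; positivity)
    (contDiff_id.add (contDiff_id.pow 3))
  convert hsmooth.comp contDiff_neg using 1
  ext z
  simp

theorem hasDerivAt_of_eq_neg_sub_cube (hU : ∀ z, z = -U z - U z ^ 3) (z : ℝ) :
    HasDerivAt U (-(1 + 3 * U z ^ 2))⁻¹ z := by
  have hcubic : HasDerivAt (fun u : ℝ => -u - u ^ 3) (-(1 + 3 * U z ^ 2)) (U z) := by
    refine ((hasDerivAt_neg (U z)).fun_sub (hasDerivAt_pow 3 (U z))).congr_deriv ?_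
    norm_num
    ring
  exact hcubic.of_local_left_inverse (contDiff_of_eq_neg_sub_cube hU).continuous.continuousAt
    (neg_ne_zero.mpr (by positivity)) (.of_forall fun w => (hU w).symm)

theorem selfSimilarBurgers1d_eq_zero_of_eq_neg_sub_cube (hU : ∀ z, z = -U z - U z ^ 3)
    (s : ℝ) : selfSimilarBurgers1d U s = 0 := by
  have hpos : 0 < 1 + 3 * U s ^ 2 := by positivity
  rw [selfSimilarBurgers1d, (hasDerivAt_of_eq_neg_sub_cube hU s).deriv]
  field_simp
  linear_combination (-3) * hU s

end CubicInverse

-- Coordinates are indexed from `0`: `y 0, y 1, y 2` are the paper's `y₁, y₂, y₃`.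
noncomputable def selfSimilarBurgers3d (W : (Fin 3 → ℝ) → ℝ) (y : Fin 3 → ℝ) : ℝ :=
  -(1 / 2) * W y
    + ((3 / 2) * y 0 + W y) * fderiv ℝ W y (Pi.single 0 1)
    + (1 / 2) * y 1 * fderiv ℝ W y (Pi.single 1 1)
    + (1 / 2) * y 2 * fderiv ℝ W y (Pi.single 2 1)

noncomputable def transverseWeight (y : Fin 3 → ℝ) : ℝ := √(1 + y 1 ^ 2 + y 2 ^ 2)

noncomputable def burgersProfile3d (U : ℝ → ℝ) (y : Fin 3 → ℝ) : ℝ :=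
  transverseWeight y * U (y 0 / transverseWeight y ^ 3)

abbrev coord (i : Fin 3) : (Fin 3 → ℝ) →L[ℝ] ℝ := ContinuousLinearMap.proj i

theorem transverseWeight_pos (y : Fin 3 → ℝ) : 0 < transverseWeight y :=
  Real.sqrt_pos_of_pos (by positivity)

theorem transverseWeight_sq (y : Fin 3 → ℝ) : transverseWeight y ^ 2 = 1 + y 1 ^ 2 + y 2 ^ 2 :=
  Real.sq_sqrt (by positivity)

theorem contDiff_transverseWeight {n : WithTop ℕ∞} : ContDiff ℝ n transverseWeight :=
  (contDiff_const.add ((contDiff_apply ℝ ℝ (1 : Fin 3)).pow 2)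
    |>.add ((contDiff_apply ℝ ℝ (2 : Fin 3)).pow 2)).sqrt fun y => by positivity

theorem hasFDerivAt_transverseWeight (y : Fin 3 → ℝ) :
    HasFDerivAt transverseWeight
      ((y 1 / transverseWeight y) • coord 1 + (y 2 / transverseWeight y) • coord 2) y := by
  have hsq (i : Fin 3) : HasFDerivAt (fun y : Fin 3 → ℝ => y i ^ 2) ((2 * y i) • coord i) y := by
    simpa using (hasFDerivAt_apply (𝕜 := ℝ) i y).pow 2
  have hpos : (0 : ℝ) < 1 + y 1 ^ 2 + y 2 ^ 2 := by positivity
  refine ((((hasFDerivAt_const 1 y).add (hsq 1)).add (hsq 2)).sqrt hpos.ne').congr_fderiv ?_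
  ext v
  simp only [Pi.add_apply, zero_add, one_div, mul_inv_rev, smul_add, add_apply,
    smul_apply, ContinuousLinearMap.proj_apply, smul_eq_mul, transverseWeight]
  field_simp

theorem contDiff_burgersProfile3d {U : ℝ → ℝ} {n : WithTop ℕ∞} (hU : ContDiff ℝ n U) :
    ContDiff ℝ n (burgersProfile3d U) :=
  contDiff_transverseWeight.mul <| hU.comp <| (contDiff_apply ℝ ℝ (0 : Fin 3)).div
    (contDiff_transverseWeight.pow 3) fun y => (pow_pos (transverseWeight_pos y) 3).ne'

theorem hasFDerivAt_burgersProfile3d {U U' : ℝ → ℝ} (hU : ∀ s, HasDerivAt U (U' s) s)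
    {y : Fin 3 → ℝ} {r' : (Fin 3 → ℝ) →L[ℝ] ℝ} (hr : HasFDerivAt transverseWeight r' y) :
    HasFDerivAt (burgersProfile3d U)
      ((U' (y 0 / transverseWeight y ^ 3) / transverseWeight y ^ 2) • coord 0
        + (U (y 0 / transverseWeight y ^ 3)
            - 3 * (y 0 / transverseWeight y ^ 3) * U' (y 0 / transverseWeight y ^ 3)) • r') y := by
  have hr0 := (transverseWeight_pos y).ne'
  have hinv := (hasDerivAt_inv (pow_ne_zero 3 hr0)).comp_hasFDerivAt y (hr.pow 3)
  have hs := (hasFDerivAt_apply (𝕜 := ℝ) (0 : Fin 3) y).mul hinv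
  refine (hr.mul ((hU _).comp_hasFDerivAt y hs)).congr_fderiv ?_
  ext v
  simp only [Pi.mul_apply, Function.comp_apply, nsmul_eq_mul, Nat.cast_ofNat, neg_smul, smul_neg,
    smul_add, add_apply, neg_apply, smul_apply, smul_eq_mul, ContinuousLinearMap.proj_apply]
  field_simp
  ring

theorem selfSimilarBurgers3d_burgersProfile3d {U : ℝ → ℝ} (hU : Differentiable ℝ U)
    (y : Fin 3 → ℝ) :
    selfSimilarBurgers3d (burgersProfile3d U) y
      = selfSimilarBurgers1d U (y 0 / transverseWeight y ^ 3) / transverseWeight y := by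
  have hW := hasFDerivAt_burgersProfile3d (fun s => (hU s).hasDerivAt)
    (hasFDerivAt_transverseWeight y)
  rw [selfSimilarBurgers3d, hW.fderiv, selfSimilarBurgers1d, burgersProfile3d]
  have hr0 := (transverseWeight_pos y).ne'
  have hr2 := transverseWeight_sq y
  set r := transverseWeight y
  set s := y 0 / r ^ 3
  have hy0 : y 0 = s * r ^ 3 := by simp only [s]; field_simp
  simp only [smul_add, add_apply, smul_apply, ContinuousLinearMap.proj_apply, smul_eq_mul,
    Pi.single_eq_same, Pi.single_eq_of_ne, ne_eq, Fin.reduceEq, not_false_eq_true, mul_one,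
    mul_zero, add_zero, zero_add]
  rw [hy0]
  field_simp
  linear_combination (3 * s * deriv U s - U s) * hr2

theorem Real.rpow_neg_three_halves {a : ℝ} (ha : 0 ≤ a) : a ^ (-(3 : ℝ) / 2) = (√a ^ 3)⁻¹ := by
  rw [Real.sqrt_eq_rpow, ← Real.rpow_natCast, ← Real.rpow_mul ha, ← Real.rpow_neg ha]
  norm_num

/-- `W̄(y) = ⟨y̌⟩^{1/2} Ū(⟨y̌⟩^{-3/2} y₁)`, with `⟨y̌⟩ = 1 + y₂² + y₃²` and `Ū` the
inverse of `u ↦ -u - u³`, is smooth on ℝ³ and solves the 3D self-similar Burgers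
equation `-(1/2)W̄ + ((3/2)y₁ + W̄)∂₁W̄ + (1/2)y₂∂₂W̄ + (1/2)y₃∂₃W̄ = 0`. -/
theorem selfsimilar_burgers_profile_3d
    (Ubar : ℝ → ℝ) (hUbar : ∀ z : ℝ, z = -Ubar z - Ubar z ^ 3)
    (Wbar : (Fin 3 → ℝ) → ℝ)
    (hWbar : ∀ y : Fin 3 → ℝ,
      Wbar y = (1 + y 1 ^ 2 + y 2 ^ 2) ^ ((1 : ℝ) / 2)
        * Ubar ((1 + y 1 ^ 2 + y 2 ^ 2) ^ (-(3 : ℝ) / 2) * y 0)) :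
    ContDiff ℝ (⊤ : ℕ∞) Wbar ∧
    ∀ y : Fin 3 → ℝ,
      -(1 / 2) * Wbar y
        + ((3 / 2) * y 0 + Wbar y) * fderiv ℝ Wbar y (Pi.single 0 1)
        + (1 / 2) * y 1 * fderiv ℝ Wbar y (Pi.single 1 1)
        + (1 / 2) * y 2 * fderiv ℝ Wbar y (Pi.single 2 1) = 0 := by
  have hW : Wbar = burgersProfile3d Ubar := funext fun y => by
    rw [hWbar, burgersProfile3d, transverseWeight, Real.rpow_neg_three_halves (by positivity),
      ← Real.sqrt_eq_rpow, inv_mul_eq_div]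
  subst hW
  have hUbar_smooth := contDiff_of_eq_neg_sub_cube hUbar
  refine ⟨(contDiff_burgersProfile3d hUbar_smooth).of_le le_top, fun y => ?_⟩
  have h := selfSimilarBurgers3d_burgersProfile3d (hUbar_smooth.differentiable (by simp)) y
  rwa [selfSimilarBurgers1d_eq_zero_of_eq_neg_sub_cube hUbar, zero_div] at h
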